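/- For the ergodic measure of maximal entropy ν_α of the Dyck shift (the pullback of the uniform Bernoulli measure on {α₁,...,α_m,β}^ℤ under the matching map φ_α), one has ν_α(⋃_{i=1}^m [α_i]) = m/(m+1), and the central exponent χ^c(ν_α) = ∫ φ^c dν_α = −((m−1)/(m+1)) log m, where φ^c(ω) = −H₁(ω) log m. -/

import Mathlib

/-- The Dyck alphabet on `2m` symbols: `Sum.inl i` is the left bracket `αᵢ`,
`Sum.inr i` is the right bracket `βᵢ`. -/
abbrev Letter (m : ℕ) := Fin m ⊕ Fin m

/-- One step of stack-based reduction in the Dyck monoid with zero.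
The state `some s` records the reduced (normal-form) word, stored reversed
(head of `s` = last letter of the normal form); `none` represents the zero
element of the monoid. -/
def dyckStep (m : ℕ) : Option (List (Letter m)) → Letter m → Option (List (Letter m))
  | none, _ => none
  | some s, Sum.inl i => some (Sum.inl i :: s)
  | some s, Sum.inr j =>
      match s with
      | Sum.inl i :: t => if i = j then some t else none
      | _ => some (Sum.inr j :: s)

/-- The reduction `red` of a word in the Dyck monoid with zero:
`none` is the zero element, `some s` is the reduced word (stored reversed),
and `some []` is the unit `1`. -/
def red {m : ℕ} (w : List (Letter m)) : Option (List (Letter m)) :=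
  w.foldl (dyckStep m) (some [])

/-- A word is admissible in the Dyck shift iff its reduction is nonzero. -/
def DyckAdmissible {m : ℕ} (w : List (Letter m)) : Prop := red w ≠ none

/-- Reversal-with-swap `ρ*` of a word: reverse the word and swap each
left bracket with the corresponding right bracket. -/
def rhoStar {m : ℕ} (w : List (Letter m)) : List (Letter m) :=
  (w.map Sum.swap).reverse

/-- The finite subword `ω_i ω_{i+1} ⋯ ω_{i+n-1}` of a two-sided sequence. -/
def wordAt {m : ℕ} (ω : ℤ → Letter m) (i : ℤ) (n : ℕ) : List (Letter m) :=
  List.ofFn fun k : Fin n => ω (i + k)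

/-- Membership in the two-sided Dyck shift: every finite subword is admissible. -/
def DyckSeq {m : ℕ} (ω : ℤ → Letter m) : Prop :=
  ∀ (i : ℤ) (n : ℕ), DyckAdmissible (wordAt ω i n)

/-- The sign of a letter: `+1` for a left bracket, `-1` for a right bracket. -/
def lsign {m : ℕ} : Letter m → ℤ := Sum.elim (fun _ => 1) (fun _ => -1)

/-- The height function `H_i(ω)`: the excess of left brackets over right
brackets between positions `0` and `i`, with the paper's sign convention
for negative `i`. -/
def Hfun {m : ℕ} (ω : ℤ → Letter m) (i : ℤ) : ℤ :=
  if 0 ≤ i then ∑ k ∈ Finset.range i.toNat, lsign (ω k)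
  else -∑ k ∈ Finset.range (-i).toNat, lsign (ω (i + k))

/-- The alphabet `{α₁,…,α_m, β}` of `Σ_α`, realized as `Fin (m+1)`:
the symbols `i < m` are the left brackets and `Fin.last m` is `β`. -/
abbrev AlphaLetter (m : ℕ) := Fin (m + 1)

/-- The set `B_α ⊂ Σ_D` of sequences in which every right bracket is matched. -/
def Balpha (m : ℕ) : Set (ℤ → Letter m) :=
  {ω | ∀ i : ℤ, (ω i).isRight →
    ∃ k : ℕ, 1 ≤ k ∧ Hfun ω (i + 1 - k) = Hfun ω (i + 1)}

/-- The map `φ_α` replacing every right bracket `β_j` by the single symbol `β`. -/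
def phiAlpha (m : ℕ) (ω : ℤ → Letter m) : ℤ → AlphaLetter m := fun i =>
  match ω i with
  | Sum.inl j => j.castSucc
  | Sum.inr _ => Fin.last m

open MeasureTheory ENNReal

/-!
Only the bracket type at position `0` matters, and `φ_α` remembers it: `ω₀` is a left bracket iff
`φ_α(ω)₀ ≠ β`. Hence `{ω₀ left} ∩ B_α` is mapped onto `φ_α(B_α) ∩ {η₀ ≠ β}`, and since `φ_α(B_α)`
has full `λ_α`-measure (`ν_α` is a probability measure) this set has measure `λ_α{η₀ ≠ β} = m/(m+1)`. The exponent is then the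
average `-(m/(m+1)) log m + (1/(m+1)) log m`.
-/

open Set

section

variable {α : Type*} [MeasurableSpace α] {μ : Measure α}

/-- `t` need not be measurable: this goes through its measurable hull. -/
lemma measure_inter_eq_of_measure_eq_univ [IsFiniteMeasure μ] {s t : Set α}
    (ht : μ t = μ univ) (hs : MeasurableSet s) : μ (s ∩ t) = μ s := by
  rw [inter_comm, ← Measure.measure_toMeasurable_inter hs (measure_ne_top μ t), inter_comm]
  refine measure_inter_conull ?_
  rw [measure_compl (measurableSet_toMeasurable μ t) (measure_ne_top _ _),
    measure_toMeasurable, ht, tsub_self]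

lemma integral_ite_const {E : Type*} [NormedAddCommGroup E] [NormedSpace ℝ E] [CompleteSpace E]
    [IsProbabilityMeasure μ] {p : α → Prop} [DecidablePred p] (hp : MeasurableSet {x | p x})
    (a b : E) :
    ∫ x, (if p x then a else b) ∂μ = μ.real {x | p x} • a + (1 - μ.real {x | p x}) • b := by
  have := integral_piecewise (μ := μ) (f := fun _ => a) (g := fun _ => b) hp
    (integrable_const a).integrableOn (integrable_const b).integrableOn
  simp only [piecewise, mem_ofPred_eq] at this
  rw [this, setIntegral_const, setIntegral_const, measureReal_compl hp, probReal_univ]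

end

lemma ENNReal.one_sub_inv_natCast_add_one (n : ℕ) :
    1 - ((n : ℝ≥0∞) + 1)⁻¹ = n / (n + 1) := by
  refine ENNReal.sub_eq_of_eq_add (by simp) ?_
  rw [← one_div, ENNReal.div_add_div_same, ENNReal.div_self (by simp) (by simp)]

lemma phiAlpha_apply_ne_last_iff {m : ℕ} (ω : ℤ → Letter m) (i : ℤ) :
    phiAlpha m ω i ≠ Fin.last m ↔ (ω i).isLeft := by
  unfold phiAlpha
  cases ω i with
  | inl j => simp [(Fin.castSucc_lt_last j).ne]
  | inr j => simp

lemma image_phiAlpha_isLeft_inter (m : ℕ) (i : ℤ) (s : Set (ℤ → Letter m)) :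
    phiAlpha m '' ({ω | (ω i).isLeft} ∩ s) = {η | η i ≠ Fin.last m} ∩ phiAlpha m '' s := by
  have hpre : {ω : ℤ → Letter m | (ω i).isLeft} = phiAlpha m ⁻¹' {η | η i ≠ Fin.last m} := by
    ext ω
    exact (phiAlpha_apply_ne_last_iff ω i).symm
  rw [hpre, inter_comm, image_inter_preimage, inter_comm]

lemma measurableSet_isLeft_apply (m : ℕ) (i : ℤ) :
    MeasurableSet {ω : ℤ → Letter m | (ω i).isLeft} := by
  have hletter : MeasurableSet {x : Letter m | x.isLeft} := range_inl ▸ measurableSet_range_inl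
  exact measurable_pi_apply (X := fun _ : ℤ => Letter m) i hletter

theorem mme_alpha_cylinder_and_exponent_general (m : ℕ)
    (lam : Measure (ℤ → AlphaLetter m)) [IsProbabilityMeasure lam]
    (hcyl : ∀ (F : Finset ℤ) (g : ℤ → AlphaLetter m),
      lam {ω | ∀ i ∈ F, ω i = g i} = (((m : ℝ≥0∞) + 1)⁻¹) ^ F.card)
    (nua : Measure (ℤ → Letter m)) [IsProbabilityMeasure nua]
    (hnua : ∀ S : Set (ℤ → Letter m), MeasurableSet S →
      nua S = lam (phiAlpha m '' (S ∩ Balpha m))) :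
    nua {ω | (ω 0).isLeft} = (m : ℝ≥0∞) / ((m : ℝ≥0∞) + 1) ∧
    (∫ ω, (if (ω 0).isLeft then -Real.log m else Real.log m) ∂nua)
      = -(((m : ℝ) - 1) / ((m : ℝ) + 1)) * Real.log m := by
  have hfull : lam (phiAlpha m '' Balpha m) = lam univ := by
    simpa using (hnua univ MeasurableSet.univ).symm
  have hbeta : lam {η | η 0 = Fin.last m} = ((m : ℝ≥0∞) + 1)⁻¹ := by
    simpa using hcyl {0} fun _ => Fin.last m
  have hbeta_meas : MeasurableSet {η : ℤ → AlphaLetter m | η 0 = Fin.last m} :=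
    measurable_pi_apply 0 (measurableSet_singleton _)
  have hnot_beta_meas : MeasurableSet {η : ℤ → AlphaLetter m | η 0 ≠ Fin.last m} :=
    hbeta_meas.compl
  have hleft : nua {ω | (ω 0).isLeft} = (m : ℝ≥0∞) / ((m : ℝ≥0∞) + 1) := by
    rw [hnua _ (measurableSet_isLeft_apply m 0), image_phiAlpha_isLeft_inter,
      measure_inter_eq_of_measure_eq_univ hfull hnot_beta_meas,
      ← ENNReal.one_sub_inv_natCast_add_one, ← hbeta]
    exact prob_compl_eq_one_sub hbeta_meas
  refine ⟨hleft, ?_⟩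
  have hleft_real : nua.real {ω | (ω 0).isLeft} = m / (m + 1) := by
    simp [measureReal_def, hleft, ENNReal.toReal_div, ENNReal.toReal_add]
  rw [integral_ite_const (measurableSet_isLeft_apply m 0), hleft_real, smul_eq_mul, smul_eq_mul]
  field_simp
  ring

/-- For the measure of maximal entropy `ν_α = λ_α ∘ φ_α` of
the Dyck shift (`λ_α` being the uniform Bernoulli measure on `{α₁,…,α_m,β}^ℤ`),
the union of the left-bracket cylinders has measure `m/(m+1)` and the central
exponent is `χ^c(ν_α) = ∫ φ^c dν_α = -((m-1)/(m+1)) log m`. -/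
theorem mme_alpha_cylinder_and_exponent (m : ℕ) (hm : 2 ≤ m)
    (lam : Measure (ℤ → AlphaLetter m)) [IsProbabilityMeasure lam]
    (hcyl : ∀ (F : Finset ℤ) (g : ℤ → AlphaLetter m),
      lam {ω | ∀ i ∈ F, ω i = g i} = (((m : ℝ≥0∞) + 1)⁻¹) ^ F.card)
    (nua : Measure (ℤ → Letter m)) [IsProbabilityMeasure nua]
    (hnua : ∀ S : Set (ℤ → Letter m), MeasurableSet S →
      nua S = lam (phiAlpha m '' (S ∩ Balpha m))) :
    nua {ω | (ω 0).isLeft} = (m : ℝ≥0∞) / ((m : ℝ≥0∞) + 1) ∧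
    (∫ ω, (if (ω 0).isLeft then -Real.log m else Real.log m) ∂nua)
      = -(((m : ℝ) - 1) / ((m : ℝ) + 1)) * Real.log m :=
  mme_alpha_cylinder_and_exponent_general m lam hcyl nua hnua
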